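/- arXiv:1401.2836 — 2 statements merged into one kernel-verified Lean document; each statement's English description precedes it below -/
import Mathlib

section
/- Let S be an additively divisible semiring (commutative, possibly without neutral elements) with at least two elements, and suppose S is additively cancellative: a + c = b + c implies a = b for all a, b, c ∈ S. Then S is not finitely generated. -/
/-!
Cancellativity embeds `S` in its ring of formal differences; adjoining a unit gives a
commutative ring `R`, which is a finitely generated `ℤ`-algebra when `S` is finitely generated.
Divisibility makes the ideal `D` generated by `S` satisfy `D = n D` for every `n ≥ 1`. As `R` is
Noetherian, Nakayama's lemma gives `r` with `r - 1 ∈ (n)` and `r D = 0`. If `D ≠ 0`, pick a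
maximal ideal `m ⊇ ann D`: the residue field `R / m` is of finite type over the Jacobson ring
`ℤ`, hence finite, so its characteristic `p` lies in `m`; for `n = p` both `r` and `r - 1` lie
in `m`. So `D = 0`, whereas two distinct elements of `S` have distinct images in `D`.
-/

/-- `nmul n a` is the `n`-fold sum `a + ⋯ + a` (for `n ≥ 1`; `nmul 0 a = a` is junk). -/
def nmul {S : Type*} [Add S] (n : ℕ) (a : S) : S :=
  Nat.rec a (fun _ b => b + a) (n - 1)

/-- The subsemiring generated by `A`: the smallest subset of `S` containing `A`
and closed under addition and multiplication. -/
def genClosure {S : Type*} [Add S] [Mul S] (A : Set S) : Set S :=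
  ⋂₀ {T : Set S | A ⊆ T ∧ (∀ x ∈ T, ∀ y ∈ T, x + y ∈ T) ∧ (∀ x ∈ T, ∀ y ∈ T, x * y ∈ T)}

theorem nmul_succ {S : Type*} [Add S] {n : ℕ} (hn : 0 < n) (a : S) :
    nmul (n + 1) a = nmul n a + a := by
  obtain ⟨k, rfl⟩ := Nat.exists_eq_add_of_lt hn
  rfl

theorem map_nmul {S M : Type*} [Add S] [AddMonoid M] (f : S →ₙ+ M) {n : ℕ} (hn : 0 < n)
    (a : S) : f (nmul n a) = n • f a := by
  induction n, hn using Nat.le_induction with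
  | base => simp [nmul]
  | succ k hk ih => rw [nmul_succ hk, map_add, ih, succ_nsmul]

theorem genClosure_subset {S : Type*} [Add S] [Mul S] {A T : Set S} (hA : A ⊆ T)
    (hadd : ∀ x ∈ T, ∀ y ∈ T, x + y ∈ T) (hmul : ∀ x ∈ T, ∀ y ∈ T, x * y ∈ T) :
    genClosure A ⊆ T :=
  Set.sInter_subset_of_mem ⟨hA, hadd, hmul⟩

instance Int.instIsJacobsonRing : IsJacobsonRing ℤ := by
  refine isJacobsonRing_iff_prime_eq.mpr fun P hP => ?_
  rcases eq_or_ne P ⊥ with rfl | hP0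
  · refine eq_bot_iff.mpr fun x hx => ?_
    rcases Int.isUnit_iff.mp (Ideal.mem_jacobson_bot.mp hx x) with h | h
    · exact mul_self_eq_zero.mp (by linarith)
    · nlinarith [mul_self_nonneg x]
  · have := hP.isMaximal hP0
    exact Ideal.jacobson_eq_self_of_isMaximal

theorem ringChar_ne_zero_of_finiteType (K : Type*) [Field K] [Algebra ℤ K]
    [Algebra.FiniteType ℤ K] : ringChar K ≠ 0 := by
  intro h
  have : CharP K 0 := ringChar.eq_iff.mp h
  have := CharP.charP_to_charZero K
  have := finite_of_finite_type_of_isJacobsonRing ℤ K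
  exact Int.not_isField
    (isField_of_isIntegral_of_isField (algebraMap ℤ K).injective_int (Field.toIsField K))

theorem Ideal.exists_natCast_mem_of_isMaximal {R : Type*} [CommRing R] [Algebra ℤ R]
    [Algebra.FiniteType ℤ R] (m : Ideal R) [m.IsMaximal] :
    ∃ p : ℕ, 0 < p ∧ (p : R) ∈ m := by
  have : Algebra.FiniteType ℤ (R ⧸ m) :=
    .of_surjective (Ideal.Quotient.mkₐ ℤ m) (Ideal.Quotient.mkₐ_surjective ℤ m)
  let := Ideal.Quotient.field m
  refine ⟨ringChar (R ⧸ m), Nat.pos_of_ne_zero (ringChar_ne_zero_of_finiteType _), ?_⟩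
  rw [← Ideal.Quotient.eq_zero_iff_mem, map_natCast]
  exact ringChar.Nat.cast_ringChar

theorem Ideal.eq_bot_of_le_span_natCast_smul {R : Type*} [CommRing R] [Algebra ℤ R]
    [Algebra.FiniteType ℤ R] (D : Ideal R)
    (hD : ∀ n : ℕ, 0 < n → D ≤ Ideal.span {(n : R)} • D) : D = ⊥ := by
  have := Algebra.FiniteType.isNoetherianRing ℤ R
  by_contra hne
  obtain ⟨m, hm, hann⟩ :=
    Ideal.exists_le_maximal _ (mt Submodule.annihilator_eq_top_iff.mp hne)
  obtain ⟨p, hp, hpm⟩ := m.exists_natCast_mem_of_isMaximal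
  obtain ⟨r, hr1, hr⟩ :=
    Submodule.exists_sub_one_mem_and_smul_eq_zero_of_fg_of_le_smul _ D
      (IsNoetherian.noetherian D) (hD p hp)
  have hrm : r ∈ m := hann (Submodule.mem_annihilator.mpr hr)
  have hr1m : r - 1 ∈ m := (Ideal.span_singleton_le_iff_mem m).mpr hpm hr1
  exact hm.ne_top ((Ideal.eq_top_iff_one m).mpr (by simpa using m.sub_mem hrm hr1m))

theorem span_range_le_natCast_smul {S R : Type*} [Add S] [CommRing R] (f : S →ₙ+ R) {n : ℕ}
    (hn : 0 < n) (hdiv : ∀ a : S, ∃ b, nmul n b = a) :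
    Ideal.span (Set.range f) ≤ Ideal.span {(n : R)} • Ideal.span (Set.range f) := by
  rw [Ideal.span_le]
  rintro _ ⟨a, rfl⟩
  obtain ⟨b, rfl⟩ := hdiv a
  rw [map_nmul f hn, nsmul_eq_mul]
  exact Submodule.smul_mem_smul (Ideal.mem_span_singleton_self _)
    (Ideal.subset_span ⟨b, rfl⟩)

theorem map_eq_zero_of_divisible {S R : Type*} [Add S] [CommRing R] [Algebra ℤ R]
    [Algebra.FiniteType ℤ R] (f : S →ₙ+ R)
    (hdiv : ∀ a : S, ∀ n : ℕ, 0 < n → ∃ b, nmul n b = a) (a : S) : f a = 0 := by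
  have hD := Ideal.eq_bot_of_le_span_natCast_smul _
    fun n hn => span_range_le_natCast_smul f hn fun c => hdiv c n hn
  exact (Ideal.mem_bot (R := R)).mp (hD ▸ Ideal.subset_span ⟨a, rfl⟩)

/-- The pair `(a, b)` stands for the formal difference `a - b`. -/
def GrothendieckRing.Rel (S : Type*) [Add S] (x y : S × S) : Prop :=
  x.1 + y.2 = y.1 + x.2

/-- Without cancellation `Rel` need not be transitive; `Quot` divides out the equivalence it
generates. -/
def GrothendieckRing (S : Type*) [Add S] : Type _ :=
  Quot (GrothendieckRing.Rel S)

namespace GrothendieckRing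

variable {S : Type*} [AddCommSemigroup S]

def mk (x : S × S) : GrothendieckRing S := Quot.mk _ x

@[elab_as_elim]
theorem ind {motive : GrothendieckRing S → Prop} (h : ∀ x, motive (mk x))
    (q : GrothendieckRing S) : motive q :=
  Quot.ind h q

theorem sound {x y : S × S} (h : x.1 + y.2 = y.1 + x.2) : mk x = mk y :=
  Quot.sound h

theorem rel_add {x x' y y' : S × S} (hx : Rel S x x') (hy : Rel S y y') :
    Rel S (x + y) (x' + y') := by
  simp only [Rel, Prod.fst_add, Prod.snd_add] at hx hy ⊢
  rw [add_add_add_comm, hx, hy, add_add_add_comm]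

theorem rel_swap {x y : S × S} (h : Rel S x y) : Rel S x.swap y.swap :=
  (add_comm _ _).trans (h.symm.trans (add_comm _ _))

instance : Add (GrothendieckRing S) :=
  ⟨Quot.map₂ (· + ·) (fun _ _ _ => rel_add rfl) (fun _ _ _ h => rel_add h rfl)⟩

instance : Neg (GrothendieckRing S) :=
  ⟨Quot.map Prod.swap fun _ _ => rel_swap⟩

noncomputable instance [Nonempty S] : Zero (GrothendieckRing S) :=
  ⟨mk (Classical.arbitrary S, Classical.arbitrary S)⟩

theorem mk_self [Nonempty S] (a : S) : mk (a, a) = 0 :=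
  sound (add_comm _ _)

noncomputable instance [Nonempty S] : AddCommGroup (GrothendieckRing S) where
  add_assoc := by
    rintro ⟨x⟩ ⟨y⟩ ⟨z⟩
    exact congrArg mk (add_assoc x y z)
  add_comm := by
    rintro ⟨x⟩ ⟨y⟩
    exact congrArg mk (add_comm x y)
  zero_add := by
    rintro ⟨x⟩
    exact sound (by simp only [Prod.fst_add, Prod.snd_add]; ac_rfl)
  add_zero := by
    rintro ⟨x⟩
    exact sound (by simp only [Prod.fst_add, Prod.snd_add]; ac_rfl)
  neg_add_cancel := by
    rintro ⟨x⟩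
    rw [← mk_self (x.1 + x.2)]
    exact sound (by simp only [Prod.fst_add, Prod.snd_add, Prod.fst_swap, Prod.snd_swap]; ac_rfl)
  nsmul := nsmulRec
  zsmul := zsmulRec

section Mul

variable [CommSemigroup S]

/-- `(a - b)(c - d) = (ac + bd) - (ad + bc)` -/
def mulPair (x y : S × S) : S × S :=
  (x.1 * y.1 + x.2 * y.2, x.1 * y.2 + x.2 * y.1)

theorem mulPair_comm (x y : S × S) : mulPair x y = mulPair y x := by
  simp only [mulPair, mul_comm x.1, mul_comm x.2, add_comm (y.2 * x.1)]

variable [LeftDistribClass S]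

theorem rel_mulPair_left (x : S × S) {y y' : S × S} (h : Rel S y y') :
    Rel S (mulPair x y) (mulPair x y') := by
  simp only [Rel, mulPair] at h ⊢
  calc _ = x.1 * (y.1 + y'.2) + x.2 * (y'.1 + y.2) := by simp only [mul_add]; ac_rfl
    _ = x.1 * (y'.1 + y.2) + x.2 * (y.1 + y'.2) := by rw [h]
    _ = _ := by simp only [mul_add]; ac_rfl

instance : Mul (GrothendieckRing S) :=
  ⟨Quot.map₂ mulPair (fun x _ _ => rel_mulPair_left x)
    (fun x x' y h => mulPair_comm x y ▸ mulPair_comm x' y ▸ rel_mulPair_left y h)⟩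

variable [RightDistribClass S]

noncomputable instance [Nonempty S] : NonUnitalCommRing (GrothendieckRing S) where
  mul_assoc := by
    rintro ⟨x⟩ ⟨y⟩ ⟨z⟩
    refine congrArg mk (Prod.ext ?_ ?_) <;> simp only [mulPair, mul_add, add_mul, mul_assoc] <;>
      ac_rfl
  mul_comm := by
    rintro ⟨x⟩ ⟨y⟩
    exact congrArg mk (mulPair_comm x y)
  left_distrib := by
    rintro ⟨x⟩ ⟨y⟩ ⟨z⟩
    refine congrArg mk (Prod.ext ?_ ?_) <;>
      simp only [mulPair, Prod.fst_add, Prod.snd_add, mul_add] <;> ac_rfl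
  right_distrib := by
    rintro ⟨x⟩ ⟨y⟩ ⟨z⟩
    refine congrArg mk (Prod.ext ?_ ?_) <;>
      simp only [mulPair, Prod.fst_add, Prod.snd_add, add_mul] <;> ac_rfl
  zero_mul := by
    rintro ⟨x⟩
    change mk (mulPair _ x) = 0
    rw [mulPair, add_comm (_ * x.2)]
    exact mk_self _
  mul_zero := by
    rintro ⟨x⟩
    exact mk_self _

end Mul

/-- `S` need not have a zero, so `a` is encoded as the difference `(a + a) - a`. -/
def of : S →ₙ+ GrothendieckRing S where
  toFun a := mk (a + a, a)
  map_add' a b := congrArg mk (Prod.ext (add_add_add_comm a b a b) rfl)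

theorem mk_eq_of_sub_of [Nonempty S] (x : S × S) : mk x = of x.1 - of x.2 :=
  sound (by simp only [Prod.fst_add, Prod.snd_add, Prod.fst_swap, Prod.snd_swap]; ac_rfl)

theorem of_mul [CommSemigroup S] [LeftDistribClass S] [RightDistribClass S] (a b : S) :
    of (a * b) = of a * of b :=
  sound (by simp only [mulPair, mul_add, add_mul]; ac_rfl)

section Cancel

variable [IsRightCancelAdd S]

theorem rel_equivalence : Equivalence (Rel S) where
  refl _ := rfl
  symm h := h.symm
  trans {x y z} hxy hyz := add_right_cancel (b := y.2) <| by
    calc x.1 + z.2 + y.2 = (x.1 + y.2) + z.2 := by ac_rfl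
      _ = (y.1 + z.2) + x.2 := by rw [hxy]; ac_rfl
      _ = z.1 + x.2 + y.2 := by rw [hyz]; ac_rfl

theorem mk_eq_mk_iff {x y : S × S} : mk x = mk y ↔ Rel S x y :=
  ⟨fun h => rel_equivalence.eqvGen_iff.mp (Quot.eqvGen_exact h), sound⟩

theorem of_injective : Function.Injective (of : S → GrothendieckRing S) := fun a b h => by
  have h' : a + a + b = b + b + a := mk_eq_mk_iff.mp h
  exact add_right_cancel (b := a + b) (by rw [← add_assoc, h']; ac_rfl)

end Cancel

section FiniteType

variable [CommSemigroup S] [LeftDistribClass S] [RightDistribClass S] [Nonempty S]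

theorem adjoin_image_of_eq_top {A : Set S} (hA : genClosure A = Set.univ) :
    Algebra.adjoin ℤ ((fun a => (of a : Unitization ℤ (GrothendieckRing S))) '' A) = ⊤ := by
  set B := Algebra.adjoin ℤ ((fun a => (of a : Unitization ℤ (GrothendieckRing S))) '' A)
  have hof (a : S) : (of a : Unitization ℤ (GrothendieckRing S)) ∈ B := by
    refine genClosure_subset (T := {a | (of a : Unitization ℤ (GrothendieckRing S)) ∈ B})
      (fun a ha => Algebra.subset_adjoin ⟨a, ha, rfl⟩) (fun x hx y hy => ?_)
      (fun x hx y hy => ?_) (hA ▸ Set.mem_univ a)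
    · rw [Set.mem_ofPred_eq, map_add, Unitization.inr_add]
      exact add_mem hx hy
    · rw [Set.mem_ofPred_eq, of_mul, Unitization.inr_mul]
      exact mul_mem hx hy
  refine eq_top_iff.mpr fun r _ => ?_
  rw [← Unitization.inl_fst_add_inr_snd_eq r]
  refine add_mem (Unitization.algebraMap_eq_inl (R := ℤ) (A := GrothendieckRing S) ▸
    Subalgebra.algebraMap_mem B r.fst) ?_
  induction r.snd using ind with
  | h x =>
    rw [mk_eq_of_sub_of, Unitization.inr_sub]
    exact B.toSubmodule.sub_mem (hof _) (hof _)

theorem finiteType_unitization {A : Set S} (hfin : A.Finite) (hA : genClosure A = Set.univ) :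
    Algebra.FiniteType ℤ (Unitization ℤ (GrothendieckRing S)) :=
  ⟨Subalgebra.fg_def.mpr ⟨_, hfin.image _, adjoin_image_of_eq_top hA⟩⟩

end FiniteType

end GrothendieckRing

theorem stmt_14 {S : Type*} [AddCommSemigroup S] [CommSemigroup S]
    (hdl : ∀ a b c : S, a * (b + c) = a * b + a * c)
    (hdr : ∀ a b c : S, (a + b) * c = a * c + b * c)
    (hdiv : ∀ a : S, ∀ n : ℕ, 1 ≤ n → ∃ b : S, nmul n b = a)
    (hnontriv : ∃ a b : S, a ≠ b)
    (hcanc : ∀ a b c : S, a + c = b + c → a = b) :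
    ¬ ∃ A : Set S, A.Finite ∧ genClosure A = Set.univ := by
  rintro ⟨A, hAfin, hgen⟩
  obtain ⟨a, b, hab⟩ := hnontriv
  have : LeftDistribClass S := ⟨hdl⟩
  have : RightDistribClass S := ⟨hdr⟩
  have : IsRightCancelAdd S := ⟨fun c a b h => hcanc a b c h⟩
  have : Nonempty S := ⟨a⟩
  have := GrothendieckRing.finiteType_unitization hAfin hgen
  let ι : S →ₙ+ Unitization ℤ (GrothendieckRing S) :=
    (AddHomClass.toAddHom (Unitization.inrNonUnitalAlgHom ℤ _)).comp GrothendieckRing.of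
  have hι := map_eq_zero_of_divisible (R := Unitization ℤ (GrothendieckRing S)) ι hdiv
  exact hab (GrothendieckRing.of_injective (Unitization.inr_injective ((hι a).trans (hι b).symm)))
end

section
/- Let S be an additively divisible semiring (commutative, possibly without neutral elements) generated by a single element w, and suppose S has no multiplicative identity (there is no e ∈ S with e·x = x for all x ∈ S). Then either S is additively idempotent, or there exists a ∈ S such that the set I = {u + a·u : u ∈ S} is an ideal of S (I is closed under addition and s·t ∈ I for every s ∈ S and t ∈ I) all of whose elements are additively idempotent (t + t = t for every t ∈ I). -/
/-!
Write `w = b + b`. As every element is `n w + w y`, `n w` or `w y`, this gives a relation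
`w = w + (m w + c w)` or `w = w + m w` with `m ≥ 1`; the form `w y` would make `y + y` an identity.
Both sides of the relation are additive and commute with multiplication, so it holds with any `x`
in place of `w`. If `x + t = x`, then also `m x + t = m x`. So, dividing `w = m b`, the element
`t = m b + c b` is idempotent, because `b + t = b` (in the second case every `m b` is).
Since `c b` is a multiple of `w`, `t = w + a w` for some `a`, and the idempotency of `u + a u`
spreads from `w` to every `u`.
-/

section Multiples

variable {S : Type*} [AddCommSemigroup S]

lemma nmul_succ_succ (n : ℕ) (a : S) : nmul (n + 2) a = nmul (n + 1) a + a := rfl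

lemma nmul_add (n : ℕ) (a b : S) : nmul n (a + b) = nmul n a + nmul n b := by
  induction n with
  | zero => rfl
  | succ n ih =>
    rcases n with _ | n
    · rfl
    · rw [nmul_succ_succ, ih, nmul_succ_succ, nmul_succ_succ, add_add_add_comm]

lemma nmul_add_nmul (m n : ℕ) (a : S) :
    nmul (m + 1) a + nmul (n + 1) a = nmul (m + n + 2) a := by
  induction n with
  | zero => rfl
  | succ n ih => rw [nmul_succ_succ, ← add_assoc, ih]; rfl

lemma nmul_add_eq_of_add_eq {x t : S} (h : x + t = x) (n : ℕ) : nmul n x + t = nmul n x := by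
  induction n with
  | zero => exact h
  | succ n ih =>
    rcases n with _ | n
    · exact h
    · rw [nmul_succ_succ, add_assoc, h]

lemma add_self_of_add_nmul_add_eq {x z : S} {n : ℕ} (h : x + (nmul n x + z) = x) :
    (nmul n x + z) + (nmul n x + z) = nmul n x + z := by
  calc (nmul n x + z) + (nmul n x + z) = (nmul n x + (nmul n x + z)) + z := by ac_rfl
    _ = nmul n x + z := by rw [nmul_add_eq_of_add_eq h]

lemma add_self_of_forall_add_nmul_eq (hdiv : ∀ a : S, ∀ n : ℕ, 1 ≤ n → ∃ b : S, nmul n b = a)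
    {k : ℕ} (h : ∀ x : S, x + nmul (k + 1) x = x) (a : S) : a + a = a := by
  obtain ⟨b, rfl⟩ := hdiv a (k + 1) (Nat.le_add_left 1 k)
  exact nmul_add_eq_of_add_eq (h b) _

end Multiples

/-- Maps in the centroid of `S`; for commutative `S` one of its two multiplicative laws suffices. -/
structure IsCentroidMap {S : Type*} [Add S] [Mul S] (f : S → S) : Prop where
  map_add : ∀ x y, f (x + y) = f x + f y
  map_mul : ∀ x y, f (x * y) = f x * y

lemma IsCentroidMap.id {S : Type*} [Add S] [Mul S] : IsCentroidMap (fun x : S => x) :=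
  ⟨fun _ _ => rfl, fun _ _ => rfl⟩

lemma genClosure_induction {S : Type*} [Add S] [Mul S] {w : S} (hgen : genClosure {w} = Set.univ)
    {p : S → Prop} (gen : p w) (add : ∀ x y, p x → p y → p (x + y))
    (mul : ∀ x y, p x → p y → p (x * y)) (x : S) : p x := by
  have hx : x ∈ genClosure {w} := hgen ▸ Set.mem_univ x
  exact Set.mem_sInter.mp hx {x | p x} ⟨Set.singleton_subset_iff.2 gen, fun x hx y hy => add x y hx hy,
    fun x hx y hy => mul x y hx hy⟩

lemma IsCentroidMap.eq_of_genClosure_eq_univ {S : Type*} [Add S] [Mul S] {w : S}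
    (hgen : genClosure {w} = Set.univ) {f g : S → S} (hf : IsCentroidMap f) (hg : IsCentroidMap g)
    (hw : f w = g w) : f = g :=
  funext <| genClosure_induction hgen hw
    (fun x y hx hy => by rw [hf.map_add, hg.map_add, hx, hy])
    (fun x y hx _ => by rw [hf.map_mul, hg.map_mul, hx])

section CommSemiring

variable {S : Type*} [AddCommSemigroup S] [CommSemigroup S] [LeftDistribClass S]

instance rightDistribClass_of_comm : RightDistribClass S :=
  ⟨fun a b c => by rw [mul_comm, mul_add, mul_comm c, mul_comm c]⟩

lemma nmul_mul (n : ℕ) (a b : S) : nmul n a * b = nmul n (a * b) := by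
  induction n with
  | zero => rfl
  | succ n ih =>
    rcases n with _ | n
    · rfl
    · rw [nmul_succ_succ, add_mul, ih, nmul_succ_succ]

namespace IsCentroidMap

lemma nmul (n : ℕ) : IsCentroidMap (fun x : S => nmul n x) :=
  ⟨nmul_add n, fun x y => (nmul_mul n x y).symm⟩

lemma mul_left (c : S) : IsCentroidMap (fun x : S => c * x) :=
  ⟨mul_add c, fun _ _ => (mul_assoc _ _ _).symm⟩

lemma add {f g : S → S} (hf : IsCentroidMap f) (hg : IsCentroidMap g) :
    IsCentroidMap (fun x => f x + g x) :=
  ⟨fun x y => by rw [hf.map_add, hg.map_add, add_add_add_comm],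
    fun x y => by rw [hf.map_mul, hg.map_mul, add_mul]⟩

end IsCentroidMap

variable {w : S}

lemma dvd_mul_of_genClosure_eq_univ (hgen : genClosure {w} = Set.univ) (x y : S) : w ∣ x * y := by
  refine genClosure_induction hgen (p := fun x => ∀ y, w ∣ x * y) (dvd_mul_right w) ?_ ?_ x y
  · intro x₁ x₂ h₁ h₂ y
    rw [add_mul]
    exact dvd_add (h₁ y) (h₂ y)
  · intro x₁ x₂ h₁ _ y
    rw [mul_assoc]
    exact h₁ _

lemma genClosure_cases (hgen : genClosure {w} = Set.univ) (x : S) :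
    (∃ n y, x = nmul (n + 1) w + w * y) ∨ (∃ n, x = nmul (n + 1) w) ∨ w ∣ x := by
  refine genClosure_induction hgen
    (p := fun x => (∃ n y, x = nmul (n + 1) w + w * y) ∨ (∃ n, x = nmul (n + 1) w) ∨ w ∣ x)
    (Or.inr (Or.inl ⟨0, rfl⟩)) ?_
    (fun x y _ _ => Or.inr (Or.inr (dvd_mul_of_genClosure_eq_univ hgen x y))) x
  rintro _ _ (⟨n, u, rfl⟩ | ⟨n, rfl⟩ | ⟨u, rfl⟩) (⟨m, v, rfl⟩ | ⟨m, rfl⟩ | ⟨v, rfl⟩)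
  · exact Or.inl ⟨n + m + 1, u + v, by rw [mul_add, ← nmul_add_nmul]; ac_rfl⟩
  · exact Or.inl ⟨n + m + 1, u, by rw [← nmul_add_nmul]; ac_rfl⟩
  · exact Or.inl ⟨n, u + v, by rw [mul_add]; ac_rfl⟩
  · exact Or.inl ⟨n + m + 1, v, by rw [← nmul_add_nmul]; ac_rfl⟩
  · exact Or.inr (Or.inl ⟨n + m + 1, nmul_add_nmul n m w⟩)
  · exact Or.inl ⟨n, v, rfl⟩
  · exact Or.inl ⟨m, u + v, by rw [mul_add, add_left_comm]⟩
  · exact Or.inl ⟨m, u, add_comm _ _⟩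
  · exact Or.inr (Or.inr ⟨u + v, (mul_add w u v).symm⟩)

lemma IsCentroidMap.forall_add_eq_self (hgen : genClosure {w} = Set.univ) {f : S → S}
    (hf : IsCentroidMap f) (hw : w + f w = w) (x : S) : x + f x = x :=
  congrFun (eq_of_genClosure_eq_univ hgen (id.add hf) id hw) x

lemma exists_forall_add_nmul_add_eq_self (hgen : genClosure {w} = Set.univ)
    (hnounit : ¬ ∃ e : S, ∀ x : S, e * x = x) {b : S} (hb : b + b = w) :
    (∃ k c, ∀ x : S, x + (nmul (k + 1) x + c * x) = x) ∨ ∃ k, ∀ x : S, x + nmul (k + 1) x = x := by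
  rcases genClosure_cases hgen b with ⟨n, y, rfl⟩ | ⟨n, rfl⟩ | ⟨y, rfl⟩
  · refine Or.inl ⟨n + n, y + y, IsCentroidMap.forall_add_eq_self hgen
      ((IsCentroidMap.nmul _).add (IsCentroidMap.mul_left _)) ?_⟩
    calc w + (nmul (n + n + 1) w + (y + y) * w)
        = (nmul (n + n + 1) w + w) + (w * y + w * y) := by rw [add_mul, mul_comm y]; ac_rfl
      _ = (nmul (n + 1) w + w * y) + (nmul (n + 1) w + w * y) := by
        rw [← nmul_succ_succ, ← nmul_add_nmul]; ac_rfl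
      _ = w := hb
  · refine Or.inr ⟨n + n, IsCentroidMap.forall_add_eq_self hgen (IsCentroidMap.nmul _) ?_⟩
    rw [add_comm, ← nmul_succ_succ, ← nmul_add_nmul, hb]
  · refine absurd ⟨y + y, fun x => ?_⟩ hnounit
    refine congrFun (IsCentroidMap.eq_of_genClosure_eq_univ hgen (IsCentroidMap.mul_left _)
      IsCentroidMap.id ?_) x
    show (y + y) * w = w
    rw [mul_comm, mul_add, hb]

lemma exists_forall_add_mul_add_self_eq (hgen : genClosure {w} = Set.univ)
    (hdiv : ∀ a : S, ∀ n : ℕ, 1 ≤ n → ∃ b : S, nmul n b = a) {k : ℕ} {c : S}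
    (h : ∀ x : S, x + (nmul (k + 1) x + c * x) = x) :
    ∃ a : S, ∀ u : S, (u + a * u) + (u + a * u) = u + a * u := by
  obtain ⟨b, hb⟩ := hdiv w (k + 1) (Nat.le_add_left 1 k)
  obtain ⟨a, ha⟩ := dvd_mul_of_genClosure_eq_univ hgen c b
  have hlin : IsCentroidMap (fun u => u + a * u) := IsCentroidMap.id.add (IsCentroidMap.mul_left a)
  refine ⟨a, congrFun (IsCentroidMap.eq_of_genClosure_eq_univ hgen (hlin.add hlin) hlin ?_)⟩
  have hw : w + a * w = nmul (k + 1) b + c * b := by rw [ha, hb, mul_comm]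
  simp only [hw]
  exact add_self_of_add_nmul_add_eq (h b)

end CommSemiring

theorem stmt_19_general {S : Type*} [AddCommSemigroup S] [CommSemigroup S]
    (hdl : ∀ a b c : S, a * (b + c) = a * b + a * c)
    (hdiv : ∀ a : S, ∀ n : ℕ, 1 ≤ n → ∃ b : S, nmul n b = a)
    (w : S) (hgen : genClosure {w} = Set.univ)
    (hnounit : ¬ ∃ e : S, ∀ x : S, e * x = x) :
    (∀ a : S, a + a = a) ∨
    (∃ a : S, (∀ s ∈ {y : S | ∃ u : S, y = u + a * u}, ∀ t ∈ {y : S | ∃ u : S, y = u + a * u},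
        s + t ∈ {y : S | ∃ u : S, y = u + a * u}) ∧
      (∀ s : S, ∀ t ∈ {y : S | ∃ u : S, y = u + a * u}, s * t ∈ {y : S | ∃ u : S, y = u + a * u}) ∧
      (∀ t ∈ {y : S | ∃ u : S, y = u + a * u}, t + t = t)) := by
  have : LeftDistribClass S := ⟨hdl⟩
  obtain ⟨b, hb⟩ := hdiv w 2 one_le_two
  rcases exists_forall_add_nmul_add_eq_self hgen hnounit hb with ⟨k, c, h⟩ | ⟨k, h⟩
  · obtain ⟨a, ha⟩ := exists_forall_add_mul_add_self_eq hgen hdiv h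
    refine Or.inr ⟨a, ?_, ?_, ?_⟩
    · rintro _ ⟨u, rfl⟩ _ ⟨v, rfl⟩
      exact ⟨u + v, by rw [mul_add]; ac_rfl⟩
    · rintro s _ ⟨u, rfl⟩
      exact ⟨s * u, by rw [mul_add, mul_left_comm]⟩
    · rintro _ ⟨u, rfl⟩
      exact ha u
  · exact Or.inl (add_self_of_forall_add_nmul_eq hdiv h)

theorem stmt_19 {S : Type*} [AddCommSemigroup S] [CommSemigroup S]
    (hdl : ∀ a b c : S, a * (b + c) = a * b + a * c)
    (hdr : ∀ a b c : S, (a + b) * c = a * c + b * c)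
    (hdiv : ∀ a : S, ∀ n : ℕ, 1 ≤ n → ∃ b : S, nmul n b = a)
    (w : S) (hgen : genClosure {w} = Set.univ)
    (hnounit : ¬ ∃ e : S, ∀ x : S, e * x = x) :
    (∀ a : S, a + a = a) ∨
    (∃ a : S, (∀ s ∈ {y : S | ∃ u : S, y = u + a * u}, ∀ t ∈ {y : S | ∃ u : S, y = u + a * u},
        s + t ∈ {y : S | ∃ u : S, y = u + a * u}) ∧
      (∀ s : S, ∀ t ∈ {y : S | ∃ u : S, y = u + a * u}, s * t ∈ {y : S | ∃ u : S, y = u + a * u}) ∧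
      (∀ t ∈ {y : S | ∃ u : S, y = u + a * u}, t + t = t)) :=
  stmt_19_general hdl hdiv w hgen hnounit
end
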